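/- If G and H are finite simple graphs and G ∪ H denotes their disjoint union, then γ_MB(G) + γ_MB(H) ≤ γ_MB(G ∪ H) ≤ min{γ_MB'(G) + γ_MB(H), γ_MB(G) + γ_MB'(H)} and max{γ_MB'(G) + γ_MB(H), γ_MB(G) + γ_MB'(H)} ≤ γ_MB'(G ∪ H) ≤ γ_MB'(G) + γ_MB'(H), with the convention that a sum involving ∞ equals ∞. -/

import Mathlib

variable {V : Type*}

/-- `D` dominates every vertex of `G` outside of `A`: each such vertex lies in the
closed neighborhood of some member of `D`. (Take `A = ∅` for ordinary domination.) -/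
def Dominates (G : SimpleGraph V) (A : Set V) (D : Finset V) : Prop :=
  ∀ v : V, v ∉ A → ∃ u ∈ D, u = v ∨ G.Adj u v

/-- `MBWin G A t k D S`: in the Maker-Breaker domination game on `G` where the vertices of
`A` are regarded as already dominated, with `D` the set of vertices selected so far by
Dominator, `S` the set selected so far by Staller, and where it is Dominator's turn if
`t = true` and Staller's turn if `t = false`, Dominator has a strategy guaranteeing that
his selected vertices dominate `V \ A` after he selects at most `k` further vertices.
Players alternately select vertices not previously selected by either player; if no
unselected vertex remains and Dominator's vertices do not dominate, Dominator has lost. -/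
inductive MBWin [Fintype V] [DecidableEq V] (G : SimpleGraph V) (A : Set V) :
    Bool → ℕ → Finset V → Finset V → Prop
  | win (t : Bool) (k : ℕ) (D S : Finset V) : Dominates G A D → MBWin G A t k D S
  | dmove (k : ℕ) (D S : Finset V) (v : V) : v ∉ D → v ∉ S →
      MBWin G A false k (insert v D) S → MBWin G A true (k + 1) D S
  | smove (k : ℕ) (D S : Finset V) : D ∪ S ≠ Finset.univ →
      (∀ v, v ∉ D → v ∉ S → MBWin G A true k D (insert v S)) → MBWin G A false k D S

/-- The Maker-Breaker domination number `γ_MB(G|A)` of the game in which the vertices of `A`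
are regarded as already dominated and Dominator moves first: the minimum `m` such that
Dominator has a winning strategy using at most `m` of his own moves, and `⊤ = ∞` if
Dominator has no winning strategy. -/
noncomputable def gammaMBRes [Fintype V] [DecidableEq V] (G : SimpleGraph V) (A : Set V) :
    ℕ∞ :=
  sInf ((fun m : ℕ => (m : ℕ∞)) '' {m : ℕ | MBWin G A true m ∅ ∅})

/-- `γ_MB'(G|A)`: as `gammaMBRes`, but Staller moves first. -/
noncomputable def gammaMBRes' [Fintype V] [DecidableEq V] (G : SimpleGraph V) (A : Set V) :
    ℕ∞ :=
  sInf ((fun m : ℕ => (m : ℕ∞)) '' {m : ℕ | MBWin G A false m ∅ ∅})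

/-- The Maker-Breaker domination number `γ_MB(G)` (Dominator moves first). -/
noncomputable def gammaMB [Fintype V] [DecidableEq V] (G : SimpleGraph V) : ℕ∞ :=
  gammaMBRes G ∅

/-- The Staller-start Maker-Breaker domination number `γ_MB'(G)`. -/
noncomputable def gammaMB' [Fintype V] [DecidableEq V] (G : SimpleGraph V) : ℕ∞ :=
  gammaMBRes' G ∅

/-- The domination number `γ(G)`: the minimum size of a dominating set of `G`. -/
noncomputable def dominationNumber [Fintype V] (G : SimpleGraph V) : ℕ :=
  sInf {m : ℕ | ∃ D : Finset V, Dominates G ∅ D ∧ D.card = m}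

/-- A `γ`-set of `G`: a dominating set of minimum size. -/
def IsGammaSet [Fintype V] (G : SimpleGraph V) (D : Finset V) : Prop :=
  Dominates G ∅ D ∧ D.card = dominationNumber G

/-!
The game from an arbitrary position has a minimax value `mbValue G A t D S ∈ ℕ∞`, which is the
optimal number of further Dominator moves (`gammaMBRes_eq_mbValue`). A move in `G ⊕g H` is a move
in one component, and all six bounds come from answering in the component the opponent has just
played in: Dominator doing so with optimal play in each component gives the upper bounds, Staller
doing so gives the lower bounds. When that component offers no useful answer (it is dominated or
full), one falls back on the fact that having the move never hurts Dominator
(`mbValue_true_le_false`), which holds because extra Staller vertices never help him.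
-/

open Finset

section Value

variable [Fintype V] [DecidableEq V]

theorem Finset.card_compl_insert_lt {s : Finset V} {v : V} (h : v ∉ s) : #(insert v s)ᶜ < #sᶜ :=
  card_lt_card (compl_ssubset_compl.2 (ssubset_insert h))

-- An empty `⨅` (Dominator to move, no free vertex, not yet dominating) is `⊤`: Staller has won.
open Classical in
noncomputable def mbValue (G : SimpleGraph V) (A : Set V) : Bool → Finset V → Finset V → ℕ∞
  | true, D, S =>
    if Dominates G A D then 0 else ⨅ (v) (_ : v ∉ D ∪ S), 1 + mbValue G A false (insert v D) S
  | false, D, S =>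
    if Dominates G A D then 0
    else if D ∪ S = univ then ⊤
    else ⨆ (v) (_ : v ∉ D ∪ S), mbValue G A true D (insert v S)
termination_by _ D S => #(D ∪ S)ᶜ
decreasing_by
  all_goals simpa only [insert_union, union_insert] using card_compl_insert_lt ‹_›

variable {G : SimpleGraph V} {A : Set V} {t : Bool} {D S : Finset V} {v : V}

theorem mbValue_of_dominates (h : Dominates G A D) : mbValue G A t D S = 0 := by
  cases t <;> rw [mbValue, if_pos h]

theorem mbValue_true_of_not_dominates (h : ¬Dominates G A D) :
    mbValue G A true D S = ⨅ (v) (_ : v ∉ D ∪ S), 1 + mbValue G A false (insert v D) S := by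
  rw [mbValue, if_neg h]

theorem mbValue_false_of_not_dominates (h : ¬Dominates G A D) (hS : D ∪ S ≠ univ) :
    mbValue G A false D S = ⨆ (v) (_ : v ∉ D ∪ S), mbValue G A true D (insert v S) := by
  rw [mbValue, if_neg h, if_neg hS]

theorem mbValue_false_of_union_eq_univ (h : ¬Dominates G A D) (hS : D ∪ S = univ) :
    mbValue G A false D S = ⊤ := by
  rw [mbValue, if_neg h, if_pos hS]

theorem mbValue_true_of_union_eq_univ (h : ¬Dominates G A D) (hS : D ∪ S = univ) :
    mbValue G A true D S = ⊤ := by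
  simp [mbValue_true_of_not_dominates h, hS]

theorem mbValue_true_le_one_add (hv : v ∉ D ∪ S) :
    mbValue G A true D S ≤ 1 + mbValue G A false (insert v D) S := by
  by_cases h : Dominates G A D
  · simp [mbValue_of_dominates h]
  · rw [mbValue_true_of_not_dominates h]
    exact iInf₂_le v hv

theorem mbValue_true_insert_le (hv : v ∉ D ∪ S) :
    mbValue G A true D (insert v S) ≤ mbValue G A false D S := by
  by_cases h : Dominates G A D
  · simp [mbValue_of_dominates h]
  · rw [mbValue_false_of_not_dominates h fun hS => hv (hS ▸ mem_univ v)]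
    exact le_iSup₂ (f := fun v _ => mbValue G A true D (insert v S)) v hv

theorem exists_mbValue_true_eq (h : ¬Dominates G A D) (hS : D ∪ S ≠ univ) :
    ∃ v ∉ D ∪ S, mbValue G A true D S = 1 + mbValue G A false (insert v D) S := by
  obtain ⟨w, hw⟩ : ∃ w, w ∉ D ∪ S := by simpa [eq_univ_iff_forall] using hS
  have : Nonempty {v // v ∉ D ∪ S} := ⟨⟨w, hw⟩⟩
  obtain ⟨⟨v, hv⟩, hmin⟩ := ENat.exists_eq_iInf fun v : {v // v ∉ D ∪ S} =>
    1 + mbValue G A false (insert v.1 D) S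
  exact ⟨v, hv, by rw [mbValue_true_of_not_dominates h, iInf_subtype', ← hmin]⟩

-- In `Bool`, `false < true`: having the move (`t = true`) is the better side for Dominator.
theorem mbValue_le_of_subset {t t' : Bool} (ht : t' ≤ t) {D S₁ S₂ : Finset V} (hS : S₁ ⊆ S₂) :
    mbValue G A t D S₁ ≤ mbValue G A t' D S₂ := by
  by_cases hdom : Dominates G A D
  · simp [mbValue_of_dominates hdom]
  cases t' with
  | true =>
    obtain rfl : t = true := top_le_iff.1 ht
    rw [mbValue_true_of_not_dominates hdom, mbValue_true_of_not_dominates hdom]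
    refine iInf₂_mono' fun v hv₂ => ?_
    have hv₁ : v ∉ D ∪ S₁ := fun h => hv₂ (union_subset_union_right hS h)
    exact ⟨v, hv₁, add_le_add_right (mbValue_le_of_subset le_rfl hS) 1⟩
  | false =>
    by_cases hfull : D ∪ S₂ = univ
    · simp [mbValue_false_of_union_eq_univ hdom hfull]
    cases t with
    | true =>
      obtain ⟨w, hw⟩ : ∃ w, w ∉ D ∪ S₂ := by simpa [eq_univ_iff_forall] using hfull
      exact (mbValue_le_of_subset le_rfl (hS.trans (subset_insert w S₂))).trans
        (mbValue_true_insert_le hw)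
    | false =>
      have hfull₁ : D ∪ S₁ ≠ univ := fun h =>
        hfull (univ_subset_iff.1 (h ▸ union_subset_union_right hS))
      rw [mbValue_false_of_not_dominates hdom hfull₁]
      refine iSup₂_le fun v hv₁ => ?_
      by_cases hvS : v ∈ S₂
      · exact mbValue_le_of_subset (Bool.false_le _) (insert_subset hvS hS)
      · have hv₂ : v ∉ D ∪ S₂ := by simp_all
        exact (mbValue_le_of_subset le_rfl (insert_subset_insert v hS)).trans
          (mbValue_true_insert_le hv₂)
termination_by #(D ∪ S₁)ᶜ + #(D ∪ S₂)ᶜ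
decreasing_by
  all_goals simp only [insert_union, union_insert]
  · exact Nat.add_lt_add_right (card_compl_insert_lt hv₁) _
  · exact Nat.add_lt_add (card_compl_insert_lt hv₁) (card_compl_insert_lt hv₂)
  · exact Nat.add_lt_add_left (card_compl_insert_lt hw) _
  · exact Nat.add_lt_add (card_compl_insert_lt hv₁) (card_compl_insert_lt hv₂)

theorem mbValue_true_le_false : mbValue G A true D S ≤ mbValue G A false D S :=
  mbValue_le_of_subset (Bool.false_le _) subset_rfl

theorem mbValue_le_of_mbWin {k : ℕ} (h : MBWin G A t k D S) :
    mbValue G A t D S ≤ k := by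
  induction h with
  | win t k D S hdom => simp [mbValue_of_dominates hdom]
  | dmove k D S v hvD hvS _ ih =>
    calc mbValue G A true D S ≤ 1 + mbValue G A false (insert v D) S :=
          mbValue_true_le_one_add (by simp [hvD, hvS])
      _ ≤ 1 + k := add_le_add_right ih 1
      _ = (k + 1 : ℕ) := by push_cast; ring
  | smove k D S hfull _ ih =>
    by_cases hdom : Dominates G A D
    · simp [mbValue_of_dominates hdom]
    rw [mbValue_false_of_not_dominates hdom hfull]
    exact iSup₂_le fun v hv => ih v (by simp_all) (by simp_all)

theorem mbWin_of_mbValue_le {t : Bool} {k : ℕ} {D S : Finset V} (h : mbValue G A t D S ≤ k) :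
    MBWin G A t k D S := by
  by_cases hdom : Dominates G A D
  · exact .win t k D S hdom
  by_cases hfull : D ∪ S = univ
  · cases t <;> simp [mbValue_true_of_union_eq_univ, mbValue_false_of_union_eq_univ, hdom,
      hfull] at h
  cases t with
  | false =>
    refine .smove k D S hfull fun v hvD hvS => ?_
    have hv : v ∉ D ∪ S := by simp [hvD, hvS]
    exact mbWin_of_mbValue_le ((mbValue_true_insert_le hv).trans h)
  | true =>
    obtain ⟨v, hv, hval⟩ := exists_mbValue_true_eq hdom hfull
    rw [hval] at h
    have hk : 1 ≤ k := by exact_mod_cast le_self_add.trans h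
    obtain ⟨j, rfl⟩ := Nat.exists_eq_add_one.2 hk
    rw [Nat.cast_add, Nat.cast_one, add_comm (j : ℕ∞)] at h
    have hmj := (ENat.add_le_add_iff_left ENat.one_ne_top).1 h
    exact .dmove j D S v (by simp_all) (by simp_all) (mbWin_of_mbValue_le hmj)
termination_by #(D ∪ S)ᶜ
decreasing_by
  all_goals simpa only [insert_union, union_insert] using card_compl_insert_lt hv

theorem sInf_mbWin_eq_mbValue :
    sInf ((fun m : ℕ => (m : ℕ∞)) '' {m : ℕ | MBWin G A t m D S}) = mbValue G A t D S := by
  refine le_antisymm ?_ (le_sInf ?_)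
  · obtain htop | hfin := eq_or_ne (mbValue G A t D S) ⊤
    · exact htop ▸ le_top
    obtain ⟨m, hm⟩ := ENat.ne_top_iff_exists.1 hfin
    rw [← hm]
    exact sInf_le ⟨m, mbWin_of_mbValue_le hm.ge, rfl⟩
  · rintro _ ⟨m, hm, rfl⟩
    exact mbValue_le_of_mbWin hm

theorem gammaMBRes_eq_mbValue : gammaMBRes G A = mbValue G A true ∅ ∅ :=
  sInf_mbWin_eq_mbValue

theorem gammaMBRes'_eq_mbValue : gammaMBRes' G A = mbValue G A false ∅ ∅ :=
  sInf_mbWin_eq_mbValue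

theorem mbValue_false_eq_mbValue_true (h : Dominates G A D ∨ D ∪ S = univ) :
    mbValue G A false D S = mbValue G A true D S := by
  by_cases hdom : Dominates G A D
  · simp [mbValue_of_dominates hdom]
  have hfull := h.resolve_left hdom
  rw [mbValue_false_of_union_eq_univ hdom hfull, mbValue_true_of_union_eq_univ hdom hfull]

end Value

section DisjointUnion

variable {α β : Type*} {G : SimpleGraph α} {H : SimpleGraph β} {A : Set (α ⊕ β)}

@[simp] theorem Finset.toLeft_empty : (∅ : Finset (α ⊕ β)).toLeft = ∅ := by ext; simp

@[simp] theorem Finset.toRight_empty : (∅ : Finset (α ⊕ β)).toRight = ∅ := by ext; simp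

theorem dominates_sum_iff {D : Finset (α ⊕ β)} :
    Dominates (G ⊕g H) A D ↔
      Dominates G (Sum.inl ⁻¹' A) D.toLeft ∧ Dominates H (Sum.inr ⁻¹' A) D.toRight := by
  refine ⟨fun h => ⟨fun a ha => ?_, fun b hb => ?_⟩, fun ⟨h₁, h₂⟩ => ?_⟩
  · obtain ⟨u | u, hu, hadj⟩ := h (.inl a) ha
    · exact ⟨u, by simpa using hu, by simpa using hadj⟩
    · simp at hadj
  · obtain ⟨u | u, hu, hadj⟩ := h (.inr b) hb
    · simp at hadj
    · exact ⟨u, by simpa using hu, by simpa using hadj⟩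
  · rintro (a | b) hv
    · obtain ⟨u, hu, hadj⟩ := h₁ a hv
      exact ⟨.inl u, by simpa using hu, by simpa using hadj⟩
    · obtain ⟨u, hu, hadj⟩ := h₂ b hv
      exact ⟨.inr u, by simpa using hu, by simpa using hadj⟩

variable [Fintype α] [DecidableEq α] [Fintype β] [DecidableEq β]

-- The `+ 1` in the measures lets a Staller-to-move bound invoke the Dominator-to-move bound at
-- the same position (and conversely in the upper bounds below).
mutual

theorem mbValue_true_add_true_le_sum (D S : Finset (α ⊕ β)) :
    mbValue G (Sum.inl ⁻¹' A) true D.toLeft S.toLeft +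
      mbValue H (Sum.inr ⁻¹' A) true D.toRight S.toRight ≤ mbValue (G ⊕g H) A true D S := by
  by_cases hdom : Dominates (G ⊕g H) A D
  · obtain ⟨h₁, h₂⟩ := dominates_sum_iff.1 hdom
    simp [mbValue_of_dominates h₁, mbValue_of_dominates h₂]
  rw [mbValue_true_of_not_dominates hdom]
  refine le_iInf₂ fun w hw => ?_
  rcases w with a | b
  · have ha : a ∉ D.toLeft ∪ S.toLeft := by simpa using hw
    calc _ ≤ 1 + mbValue G (Sum.inl ⁻¹' A) false (insert a D.toLeft) S.toLeft +
          mbValue H (Sum.inr ⁻¹' A) true D.toRight S.toRight :=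
          add_le_add_left (mbValue_true_le_one_add ha) _
      _ ≤ 1 + mbValue (G ⊕g H) A false (insert (.inl a) D) S := by
          simpa [add_assoc] using
            add_le_add_right (mbValue_false_add_true_le_sum (insert (.inl a) D) S) 1
  · have hb : b ∉ D.toRight ∪ S.toRight := by simpa using hw
    calc _ ≤ mbValue G (Sum.inl ⁻¹' A) true D.toLeft S.toLeft +
          (1 + mbValue H (Sum.inr ⁻¹' A) false (insert b D.toRight) S.toRight) :=
          add_le_add_right (mbValue_true_le_one_add hb) _
      _ ≤ 1 + mbValue (G ⊕g H) A false (insert (.inr b) D) S := by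
          simpa [add_left_comm] using
            add_le_add_right (mbValue_true_add_false_le_sum (insert (.inr b) D) S) 1
termination_by 2 * #(D ∪ S)ᶜ
decreasing_by all_goals rw [insert_union]; have := card_compl_insert_lt hw; omega

theorem mbValue_false_add_true_le_sum (D S : Finset (α ⊕ β)) :
    mbValue G (Sum.inl ⁻¹' A) false D.toLeft S.toLeft +
      mbValue H (Sum.inr ⁻¹' A) true D.toRight S.toRight ≤ mbValue (G ⊕g H) A false D S := by
  by_cases hG : Dominates G (Sum.inl ⁻¹' A) D.toLeft ∨ D.toLeft ∪ S.toLeft = univ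
  · rw [mbValue_false_eq_mbValue_true hG]
    exact (mbValue_true_add_true_le_sum D S).trans mbValue_true_le_false
  obtain ⟨hdom, hfull⟩ := not_or.1 hG
  rw [mbValue_false_of_not_dominates hdom hfull,
    ENat.biSup_add' (by simpa [eq_univ_iff_forall] using hfull)]
  refine iSup₂_le fun a ha => ?_
  have hw : Sum.inl a ∉ D ∪ S := by simpa using ha
  calc _ ≤ mbValue (G ⊕g H) A true D (insert (.inl a) S) := by
        simpa using mbValue_true_add_true_le_sum D (insert (.inl a) S)
    _ ≤ mbValue (G ⊕g H) A false D S := mbValue_true_insert_le hw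
termination_by 2 * #(D ∪ S)ᶜ + 1
decreasing_by
  all_goals first
    | omega
    | rw [union_insert]; have := card_compl_insert_lt hw; omega

theorem mbValue_true_add_false_le_sum (D S : Finset (α ⊕ β)) :
    mbValue G (Sum.inl ⁻¹' A) true D.toLeft S.toLeft +
      mbValue H (Sum.inr ⁻¹' A) false D.toRight S.toRight ≤ mbValue (G ⊕g H) A false D S := by
  by_cases hH : Dominates H (Sum.inr ⁻¹' A) D.toRight ∨ D.toRight ∪ S.toRight = univ
  · rw [mbValue_false_eq_mbValue_true hH]
    exact (mbValue_true_add_true_le_sum D S).trans mbValue_true_le_false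
  obtain ⟨hdom, hfull⟩ := not_or.1 hH
  rw [mbValue_false_of_not_dominates hdom hfull,
    ENat.add_biSup' (by simpa [eq_univ_iff_forall] using hfull)]
  refine iSup₂_le fun b hb => ?_
  have hw : Sum.inr b ∉ D ∪ S := by simpa using hb
  calc _ ≤ mbValue (G ⊕g H) A true D (insert (.inr b) S) := by
        simpa using mbValue_true_add_true_le_sum D (insert (.inr b) S)
    _ ≤ mbValue (G ⊕g H) A false D S := mbValue_true_insert_le hw
termination_by 2 * #(D ∪ S)ᶜ + 1
decreasing_by
  all_goals first
    | omega
    | rw [union_insert]; have := card_compl_insert_lt hw; omega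

end

mutual

theorem mbValue_sum_false_le_false_add_false (D S : Finset (α ⊕ β)) :
    mbValue (G ⊕g H) A false D S ≤ mbValue G (Sum.inl ⁻¹' A) false D.toLeft S.toLeft +
      mbValue H (Sum.inr ⁻¹' A) false D.toRight S.toRight := by
  by_cases hdom : Dominates (G ⊕g H) A D
  · simp [mbValue_of_dominates hdom]
  by_cases hfull : D ∪ S = univ
  · have hG : D.toLeft ∪ S.toLeft = univ := by rw [← toLeft_union, hfull, toLeft_univ]
    have hH : D.toRight ∪ S.toRight = univ := by rw [← toRight_union, hfull, toRight_univ]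
    rcases not_and_or.1 (mt dominates_sum_iff.2 hdom) with hdomG | hdomH
    · simp [mbValue_false_of_union_eq_univ hdomG hG]
    · simp [mbValue_false_of_union_eq_univ hdomH hH]
  rw [mbValue_false_of_not_dominates hdom hfull]
  refine iSup₂_le fun w hw => ?_
  rcases w with a | b
  · have ha : a ∉ D.toLeft ∪ S.toLeft := by simpa using hw
    calc _ ≤ mbValue G (Sum.inl ⁻¹' A) true D.toLeft (insert a S.toLeft) +
          mbValue H (Sum.inr ⁻¹' A) false D.toRight S.toRight := by
          simpa using mbValue_sum_true_le_true_add_false D (insert (.inl a) S)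
      _ ≤ _ := add_le_add_left (mbValue_true_insert_le ha) _
  · have hb : b ∉ D.toRight ∪ S.toRight := by simpa using hw
    calc _ ≤ mbValue G (Sum.inl ⁻¹' A) false D.toLeft S.toLeft +
          mbValue H (Sum.inr ⁻¹' A) true D.toRight (insert b S.toRight) := by
          simpa using mbValue_sum_true_le_false_add_true D (insert (.inr b) S)
      _ ≤ _ := add_le_add_right (mbValue_true_insert_le hb) _
termination_by 2 * #(D ∪ S)ᶜ
decreasing_by all_goals rw [union_insert]; have := card_compl_insert_lt hw; omega

theorem mbValue_sum_true_le_true_add_false (D S : Finset (α ⊕ β)) :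
    mbValue (G ⊕g H) A true D S ≤ mbValue G (Sum.inl ⁻¹' A) true D.toLeft S.toLeft +
      mbValue H (Sum.inr ⁻¹' A) false D.toRight S.toRight := by
  by_cases hdom : Dominates G (Sum.inl ⁻¹' A) D.toLeft
  · rw [← mbValue_false_eq_mbValue_true (.inl hdom)]
    exact mbValue_true_le_false.trans (mbValue_sum_false_le_false_add_false D S)
  rw [mbValue_true_of_not_dominates hdom]
  simp_rw [ENat.iInf_add]
  refine le_iInf₂ fun a ha => ?_
  have hw : Sum.inl a ∉ D ∪ S := by simpa using ha
  calc _ ≤ 1 + mbValue (G ⊕g H) A false (insert (.inl a) D) S := mbValue_true_le_one_add hw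
    _ ≤ _ := by
      simpa [add_assoc] using add_le_add_right
        (mbValue_sum_false_le_false_add_false (insert (.inl a) D) S) 1
termination_by 2 * #(D ∪ S)ᶜ + 1
decreasing_by
  all_goals first
    | omega
    | rw [insert_union]; have := card_compl_insert_lt hw; omega

theorem mbValue_sum_true_le_false_add_true (D S : Finset (α ⊕ β)) :
    mbValue (G ⊕g H) A true D S ≤ mbValue G (Sum.inl ⁻¹' A) false D.toLeft S.toLeft +
      mbValue H (Sum.inr ⁻¹' A) true D.toRight S.toRight := by
  by_cases hdom : Dominates H (Sum.inr ⁻¹' A) D.toRight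
  · rw [← mbValue_false_eq_mbValue_true (.inl hdom)]
    exact mbValue_true_le_false.trans (mbValue_sum_false_le_false_add_false D S)
  rw [mbValue_true_of_not_dominates hdom]
  simp_rw [ENat.add_iInf]
  refine le_iInf₂ fun b hb => ?_
  have hw : Sum.inr b ∉ D ∪ S := by simpa using hb
  calc _ ≤ 1 + mbValue (G ⊕g H) A false (insert (.inr b) D) S := mbValue_true_le_one_add hw
    _ ≤ _ := by
      simpa [add_left_comm] using add_le_add_right
        (mbValue_sum_false_le_false_add_false (insert (.inr b) D) S) 1
termination_by 2 * #(D ∪ S)ᶜ + 1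
decreasing_by
  all_goals first
    | omega
    | rw [insert_union]; have := card_compl_insert_lt hw; omega

end

end DisjointUnion

/-- If `G` and `H` are finite simple graphs and `G ⊕g H` is their disjoint union, then
`γ_MB(G) + γ_MB(H) ≤ γ_MB(G ∪ H) ≤ min{γ_MB'(G) + γ_MB(H), γ_MB(G) + γ_MB'(H)}` and
`max{γ_MB'(G) + γ_MB(H), γ_MB(G) + γ_MB'(H)} ≤ γ_MB'(G ∪ H) ≤ γ_MB'(G) + γ_MB'(H)`
(a sum involving `∞` being `∞`). -/
theorem gammaMB_disjoint_union {α β : Type*} [Fintype α] [DecidableEq α]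
    [Fintype β] [DecidableEq β] (G : SimpleGraph α) (H : SimpleGraph β) :
    gammaMB G + gammaMB H ≤ gammaMB (G ⊕g H) ∧
    gammaMB (G ⊕g H) ≤ min (gammaMB' G + gammaMB H) (gammaMB G + gammaMB' H) ∧
    max (gammaMB' G + gammaMB H) (gammaMB G + gammaMB' H) ≤ gammaMB' (G ⊕g H) ∧
    gammaMB' (G ⊕g H) ≤ gammaMB' G + gammaMB' H := by
  simp only [gammaMB, gammaMB', gammaMBRes_eq_mbValue, gammaMBRes'_eq_mbValue]
  refine ⟨?_, le_min ?_ ?_, max_le ?_ ?_, ?_⟩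
  · simpa using mbValue_true_add_true_le_sum (G := G) (H := H) (A := ∅) ∅ ∅
  · simpa using mbValue_sum_true_le_false_add_true (G := G) (H := H) (A := ∅) ∅ ∅
  · simpa using mbValue_sum_true_le_true_add_false (G := G) (H := H) (A := ∅) ∅ ∅
  · simpa using mbValue_false_add_true_le_sum (G := G) (H := H) (A := ∅) ∅ ∅
  · simpa using mbValue_true_add_false_le_sum (G := G) (H := H) (A := ∅) ∅ ∅
  · simpa using mbValue_sum_false_le_false_add_false (G := G) (H := H) (A := ∅) ∅ ∅
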